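/- arXiv:1408.0995 — 6 statements merged into one kernel-verified Lean document; each statement's English description precedes it below -/
import Mathlib

section
/- If rationals α3, β3, α2, β2 satisfy α2 = α3^2 - β3 and 2β2 = β3^2 - 4α3, and (α3, β3) lies on the curve K1 given by 8x^8 - 32x^6 y + 40x^4 y^2 + 32x^5 - 16x^2 y^3 - 64x^3 y + y^4 + 24x y^2 + 24x^2 - 8y = 0, then (α2, β2 - 2α2^2) lies on the Heegner curve y^2 = 2x(x^3 - 1). -/
/-! The substitution `x = a² - b`, `2y = b² - 4a - 4x²` turns the Heegner equation, scaled as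
`(2y)² = 8x(x³ - 1)`, into exactly the defining polynomial of `K1`; so `K1` is the pullback of the
Heegner curve along this polynomial map. -/

theorem k1_poly_eq_heegner_comp {R : Type*} [CommRing R] (a b : R) :
    8*a^8 - 32*a^6*b + 40*a^4*b^2 + 32*a^5 - 16*a^2*b^3 - 64*a^3*b + b^4 + 24*a*b^2
      + 24*a^2 - 8*b
      = (b^2 - 4*a - 4*(a^2 - b)^2)^2 - 8*(a^2 - b)*((a^2 - b)^3 - 1) := by
  ring

theorem stmt_7 (α3 β3 α2 β2 : ℚ)
    (h1 : α2 = α3^2 - β3) (h2 : 2*β2 = β3^2 - 4*α3)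
    (hK1 : 8*α3^8 - 32*α3^6*β3 + 40*α3^4*β3^2 + 32*α3^5 - 16*α3^2*β3^3
      - 64*α3^3*β3 + β3^4 + 24*α3*β3^2 + 24*α3^2 - 8*β3 = 0) :
    (β2 - 2*α2^2)^2 = 2*α2*(α2^3 - 1) := by
  have hy : 2*(β2 - 2*α2^2) = β3^2 - 4*α3 - 4*(α3^2 - β3)^2 := by
    rw [h1]
    linear_combination h2
  have hHeegner : (2*(β2 - 2*α2^2))^2 - 8*α2*(α2^3 - 1) = 0 := by
    rw [hy, h1, ← k1_poly_eq_heegner_comp]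
    exact hK1
  linear_combination hHeegner / 4
end

section
/- If rationals a3, b3 satisfy the equation of the curve K3, i.e. 8a3^8 - 32a3^6 b3 + 40a3^4 b3^2 + 64a3^5 - 16a3^2 b3^3 - 128a3^3 b3 + b3^4 + 48a3 b3^2 + 96a3^2 - 32b3 - 24 = 0, and we set a2 = a3^2 - b3 and b2 = (b3^2 - 8a3)/2, then there exists a rational k with b2 = k(a2 - 1) + 2 satisfying the Pell-type relation (k/2 - (a2+1))^2 - 2((a2+1)/2)^2 = 1, provided a2 ≠ 1. -/
/-!
The covering `K3 → K6` pulls the equation of `K6`, cleared of denominators,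
`(b₂ - 2a₂²)² - 2(a₂² - 1)² - 4(a₂ - 1)² = 0`, back to exactly one quarter of the equation of `K3`.
Away from `a₂ = 1` the slope `k = (b₂ - 2)/(a₂ - 1)` of the line through `(1, 2)` then turns that
equation, divided by `4(a₂ - 1)²`, into the Pell relation.
-/

section

variable {K : Type*} [Field K]

def curveK3 (a b : K) : K :=
  8*a^8 - 32*a^6*b + 40*a^4*b^2 + 64*a^5 - 16*a^2*b^3
    - 128*a^3*b + b^4 + 48*a*b^2 + 96*a^2 - 32*b - 24

def curveK6 (a b : K) : K :=
  (b - 2*a^2)^2 - 2*(a^2 - 1)^2 - 4*(a - 1)^2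

theorem curveK6_cover_eq_curveK3_div_four [NeZero (2 : K)] (a b : K) :
    curveK6 (a^2 - b) ((b^2 - 8*a)/2) = curveK3 a b / 4 := by
  unfold curveK6 curveK3
  rw [show (4 : K) = 2 ^ 2 by norm_num]
  field_simp
  ring

theorem exists_pell_of_curveK6_eq_zero [NeZero (2 : K)] {a b : K} (hK6 : curveK6 a b = 0)
    (ha : a ≠ 1) :
    ∃ k : K, b = k*(a - 1) + 2 ∧ (k/2 - (a + 1))^2 - 2*((a + 1)/2)^2 = 1 := by
  have ha' : a - 1 ≠ 0 := sub_ne_zero.mpr ha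
  refine ⟨(b - 2)/(a - 1), by field_simp; ring, ?_⟩
  unfold curveK6 at hK6
  field_simp
  linear_combination hK6

end

theorem stmt_8 (a3 b3 : ℚ)
    (hK3 : 8*a3^8 - 32*a3^6*b3 + 40*a3^4*b3^2 + 64*a3^5 - 16*a3^2*b3^3
      - 128*a3^3*b3 + b3^4 + 48*a3*b3^2 + 96*a3^2 - 32*b3 - 24 = 0)
    (a2 b2 : ℚ) (ha2 : a2 = a3^2 - b3) (hb2 : b2 = (b3^2 - 8*a3)/2)
    (hne : a2 ≠ 1) :
    ∃ k : ℚ, b2 = k*(a2 - 1) + 2 ∧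
      (k/2 - (a2 + 1))^2 - 2*((a2 + 1)/2)^2 = 1 := by
  have hK6 : curveK6 a2 b2 = 0 := by
    rw [ha2, hb2, curveK6_cover_eq_curveK3_div_four, curveK3, hK3, zero_div]
  exact exists_pell_of_curveK6_eq_zero hK6 hne
end

section
/- Let (z,w) be a rational point on the curve w^2 = 2z(z^4 + 4z^3 - 2z^2 + 4z + 1) with z^4 + 4z^3 - 2z^2 - 12z + 1 ≠ 0. Define x = -(z^4 + 8z^3 + 2wz + 18z^2 + 6w - 3)/(z^4 + 4z^3 - 2z^2 - 12z + 1) and y = 2·P8(z,w)/(z^4 + 4z^3 - 2z^2 - 12z + 1)^2 where P8(z,w) = (2z^5 + 10z^4 + 36z^3 + 68z^2 + 10z - 30)w - z^8 + 60z^6 + 192z^5 + 82z^4 - 128z^3 + 172z^2 + 64z + 7. Then (x,y) lies on the curve K3: 8x^8 - 32x^6 y + 40x^4 y^2 + 64x^5 - 16x^2 y^3 - 128x^3 y + y^4 + 48x y^2 + 96x^2 - 32y - 24 = 0. -/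
/-!
With `x`, `y` and a homogenizing variable `D` of weights 1, 2, 1 the K3 polynomial is weighted
homogeneous of degree 8, so at `x = X / D`, `y = Y / D ^ 2` it equals its weighted homogenization at
`(X, Y, D)` divided by `D ^ 8`. For the numerators and the denominator of the map, that
homogenization lies in the ideal of `ℤ[z, w]` generated by `w ^ 2 - 2z(z⁴ + 4z³ - 2z² + 4z + 1)`;
`grind` finds the reduction modulo this ideal, so no explicit cofactor is written down.
-/

theorem k3_weighted_homogenization {K : Type*} [Field K] (X Y D : K) (hD : D ≠ 0) :
    8*(X/D)^8 - 32*(X/D)^6*(Y/D^2) + 40*(X/D)^4*(Y/D^2)^2 + 64*(X/D)^5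
      - 16*(X/D)^2*(Y/D^2)^3 - 128*(X/D)^3*(Y/D^2) + (Y/D^2)^4 + 48*(X/D)*(Y/D^2)^2
      + 96*(X/D)^2 - 32*(Y/D^2) - 24 =
    (8*X^8 - 32*X^6*Y + 40*X^4*Y^2 + 64*X^5*D^3 - 16*X^2*Y^3 - 128*X^3*Y*D^3
      + Y^4 + 48*X*Y^2*D^3 + 96*X^2*D^6 - 32*Y*D^6 - 24*D^8) / D^8 := by
  field_simp

theorem k3_homogenization_eq_zero_of_ks {R : Type*} [CommRing R] (z w : R)
    (hKs : w^2 = 2*z*(z^4 + 4*z^3 - 2*z^2 + 4*z + 1)) :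
    let D := z^4 + 4*z^3 - 2*z^2 - 12*z + 1
    let X := -(z^4 + 8*z^3 + 2*w*z + 18*z^2 + 6*w - 3)
    let Y := 2*((2*z^5 + 10*z^4 + 36*z^3 + 68*z^2 + 10*z - 30)*w
      - z^8 + 60*z^6 + 192*z^5 + 82*z^4 - 128*z^3 + 172*z^2 + 64*z + 7)
    8*X^8 - 32*X^6*Y + 40*X^4*Y^2 + 64*X^5*D^3 - 16*X^2*Y^3 - 128*X^3*Y*D^3
      + Y^4 + 48*X*Y^2*D^3 + 96*X^2*D^6 - 32*Y*D^6 - 24*D^8 = 0 := by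
  intro D X Y
  grind

theorem stmt_13 (z w : ℚ)
    (hKs : w^2 = 2*z*(z^4 + 4*z^3 - 2*z^2 + 4*z + 1))
    (hden : z^4 + 4*z^3 - 2*z^2 - 12*z + 1 ≠ 0)
    (x y : ℚ)
    (hx : x = -(z^4 + 8*z^3 + 2*w*z + 18*z^2 + 6*w - 3) /
      (z^4 + 4*z^3 - 2*z^2 - 12*z + 1))
    (hy : y = 2*((2*z^5 + 10*z^4 + 36*z^3 + 68*z^2 + 10*z - 30)*w
      - z^8 + 60*z^6 + 192*z^5 + 82*z^4 - 128*z^3 + 172*z^2 + 64*z + 7) /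
      (z^4 + 4*z^3 - 2*z^2 - 12*z + 1)^2) :
    8*x^8 - 32*x^6*y + 40*x^4*y^2 + 64*x^5 - 16*x^2*y^3 - 128*x^3*y
      + y^4 + 48*x*y^2 + 96*x^2 - 32*y - 24 = 0 := by
  rw [hx, hy, k3_weighted_homogenization _ _ _ hden, k3_homogenization_eq_zero_of_ks z w hKs,
    zero_div]
end

section
/- If rationals α2, β2 are such that (α2, β2 - 2α2^2) lies on the Heegner curve y^2 = 2x(x^3 - 1) (i.e. (β2 - 2α2^2)^2 = 2α2(α2^3 - 1)), then a2 = 4α2^3 - 6α2β2 + 3 and b2 = 4β2^3 - 12α2β2 + 6 satisfy the K6 relation: provided a2 ≠ 1, there exists a rational k with b2 = k(a2 - 1) + 2 and (k/2 - (a2+1))^2 - 2((a2+1)/2)^2 = 1. -/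
theorem stmt_15 (α2 β2 : ℚ)
    (hK2 : (β2 - 2*α2^2)^2 = 2*α2*(α2^3 - 1))
    (a2 b2 : ℚ) (ha2 : a2 = 4*α2^3 - 6*α2*β2 + 3)
    (hb2 : b2 = 4*β2^3 - 12*α2*β2 + 6) (hne : a2 ≠ 1) :
    ∃ k : ℚ, b2 = k*(a2 - 1) + 2 ∧
      (k/2 - (a2 + 1))^2 - 2*((a2 + 1)/2)^2 = 1 := by
  have hne' : a2 - 1 ≠ 0 := sub_ne_zero.mpr hne
  refine ⟨(b2 - 2)/(a2 - 1), by field_simp; ring, ?_⟩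
  have key : (b2 - 2 - 2*(a2-1)*(a2+1))^2 - 2*(a2-1)^2*(a2+1)^2 - 4*(a2-1)^2 = 0 := by
    subst ha2 hb2
    linear_combination (-96*β2 + 16*β2^4 + 448*α2*β2^2 + 160*α2^2 - 512*α2^2*β2^3
      - 1024*α2^3*β2 + 1280*α2^4*β2^2 + 512*α2^5 - 1024*α2^6*β2 + 256*α2^8) * hK2
  field_simp
  linear_combination key
end

section
/- If rationals α3, β3 satisfy the equation of the curve K1: 8α3^8 - 32α3^6 β3 + 40α3^4 β3^2 + 32α3^5 - 16α3^2 β3^3 - 64α3^3 β3 + β3^4 + 24α3 β3^2 + 24α3^2 - 8β3 = 0, then a3 = 2α3^3 - 3α3β3 + 3 and b3 = β3^3 - 6α3β3 + 6 satisfy the equation of the curve K3: 8a3^8 - 32a3^6 b3 + 40a3^4 b3^2 + 64a3^5 - 16a3^2 b3^3 - 128a3^3 b3 + b3^4 + 48a3 b3^2 + 96a3^2 - 32b3 - 24 = 0. -/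
/-!
The map `(x, y) ↦ (a, b)` factors through the invariants `x³`, `xy`, `y³` of the action
`(x, y) ↦ (ζx, ζ²y)`, `ζ³ = 1`, which preserves `K1`. Pulled back along it, the equation of `K3`
becomes, as a polynomial identity over any commutative ring, the equation of `K1` times a cofactor
of degree 16 (irreducible over `ℚ`: it cuts out the rest of the preimage of `K3`).
-/

section

variable {R : Type*} [CommRing R]

def k1Poly (x y : R) : R :=
  8*x^8 - 32*x^6*y + 40*x^4*y^2 + 32*x^5 - 16*x^2*y^3
    - 64*x^3*y + y^4 + 24*x*y^2 + 24*x^2 - 8*y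

def k3Poly (a b : R) : R :=
  8*a^8 - 32*a^6*b + 40*a^4*b^2 + 64*a^5 - 16*a^2*b^3
    - 128*a^3*b + b^4 + 48*a*b^2 + 96*a^2 - 32*b - 24

def k1ToK3 (x y : R) : R × R :=
  (2*x^3 - 3*x*y + 3, y^3 - 6*x*y + 6)

def k1Cofactor (x y : R) : R :=
  256*x^16 - 2048*x^14*y + 2048*x^13 + 6656*x^12*y^2
    - 12288*x^11*y - 11264*x^10*y^3 + 5632*x^10 + 28160*x^9*y^2
    + 10560*x^8*y^4 - 23040*x^8*y - 30720*x^7*y^3 + 6144*x^7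
    - 5376*x^6*y^5 + 32256*x^6*y^2 + 16128*x^5*y^4 - 14336*x^5*y
    + 1344*x^4*y^6 - 17920*x^4*y^3 + 2208*x^4 - 3584*x^3*y^5
    + 9088*x^3*y^2 - 128*x^2*y^7 + 3280*x^2*y^4 - 2112*x^2*y
    + 240*x*y^6 - 1152*x*y^3 + 192*x + y^8 - 112*y^5 + 112*y^2

theorem k3Poly_k1ToK3 (x y : R) :
    k3Poly (k1ToK3 x y).1 (k1ToK3 x y).2 = k1Cofactor x y * k1Poly x y := by
  simp only [k3Poly, k1ToK3, k1Cofactor, k1Poly]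
  ring

theorem k3Poly_k1ToK3_eq_zero {x y : R} (h : k1Poly x y = 0) :
    k3Poly (k1ToK3 x y).1 (k1ToK3 x y).2 = 0 := by
  rw [k3Poly_k1ToK3, h, mul_zero]

end

theorem stmt_16 (α3 β3 : ℚ)
    (hK1 : 8*α3^8 - 32*α3^6*β3 + 40*α3^4*β3^2 + 32*α3^5 - 16*α3^2*β3^3
      - 64*α3^3*β3 + β3^4 + 24*α3*β3^2 + 24*α3^2 - 8*β3 = 0)
    (a3 b3 : ℚ) (ha3 : a3 = 2*α3^3 - 3*α3*β3 + 3)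
    (hb3 : b3 = β3^3 - 6*α3*β3 + 6) :
    8*a3^8 - 32*a3^6*b3 + 40*a3^4*b3^2 + 64*a3^5 - 16*a3^2*b3^3
      - 128*a3^3*b3 + b3^4 + 48*a3*b3^2 + 96*a3^2 - 32*b3 - 24 = 0 := by
  subst ha3 hb3
  exact k3Poly_k1ToK3_eq_zero hK1
end

section
/- Under the map α3 → (z, w) given by z = β3/α3^2 - 1, y = 1/α3^3, w = 4(z-2)y - 2(3z^2 - 2z - 1): if (α3, β3) is a rational point on K1 (8α3^8 - 32α3^6 β3 + 40α3^4 β3^2 + 32α3^5 - 16α3^2 β3^3 - 64α3^3 β3 + β3^4 + 24α3 β3^2 + 24α3^2 - 8β3 = 0) with α3 ≠ 0, then (z, w) satisfies w^2 = 2z(z^4 + 4z^3 - 2z^2 + 4z + 1). -/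
/-!
Clearing denominators, the Heegner–Stark equation pulled back along the covering
`z = β/α² - 1`, `w = 4(z - 2)/α³ - 2(3z² - 2z - 1)` becomes the equation of `K1`
multiplied by `6α² - 2β`.
-/

section HeegnerStarkCovering

variable {K : Type*} [Field K]

def coveringZ (α β : K) : K := β / α ^ 2 - 1

def coveringW (α β : K) : K :=
  4 * (coveringZ α β - 2) * (1 / α ^ 3) - 2 * (3 * coveringZ α β ^ 2 - 2 * coveringZ α β - 1)

theorem coveringW_sq_sub_eq_mul_K1 (α β : K) (hα : α ≠ 0) :
    coveringW α β ^ 2 - 2 * coveringZ α β * (coveringZ α β ^ 4 + 4 * coveringZ α β ^ 3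
      - 2 * coveringZ α β ^ 2 + 4 * coveringZ α β + 1) =
    (6 * α ^ 2 - 2 * β) / α ^ 10 * (8*α^8 - 32*α^6*β + 40*α^4*β^2 + 32*α^5 - 16*α^2*β^3
      - 64*α^3*β + β^4 + 24*α*β^2 + 24*α^2 - 8*β) := by
  unfold coveringW coveringZ
  field_simp
  ring

end HeegnerStarkCovering

theorem stmt_17 (α3 β3 : ℚ) (hα3 : α3 ≠ 0)
    (hK1 : 8*α3^8 - 32*α3^6*β3 + 40*α3^4*β3^2 + 32*α3^5 - 16*α3^2*β3^3
      - 64*α3^3*β3 + β3^4 + 24*α3*β3^2 + 24*α3^2 - 8*β3 = 0)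
    (z y w : ℚ) (hz : z = β3/α3^2 - 1) (hy : y = 1/α3^3)
    (hw : w = 4*(z - 2)*y - 2*(3*z^2 - 2*z - 1)) :
    w^2 = 2*z*(z^4 + 4*z^3 - 2*z^2 + 4*z + 1) := by
  have hz' : z = coveringZ α3 β3 := hz
  have hw' : w = coveringW α3 β3 := by rw [hw, hy, hz']; rfl
  rw [← sub_eq_zero, hz', hw', coveringW_sq_sub_eq_mul_K1 α3 β3 hα3, hK1, mul_zero]
end
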